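/- arXiv:math/0701159 — 10 statements merged into one kernel-verified Lean document; each statement's English description precedes it below -/
import Mathlib

section
/- If N is a finite p-group on which a finite abelian p'-group H acts (i.e., H has order coprime to p), then there exists n₀ ∈ N such that the centralizer of n₀ in H equals the kernel of the action of H on N, i.e., C_H(n₀) = C_H(N). -/
/-!
Induct on `|N|`, for `N` finite nilpotent of order coprime to `|H|`. Pick `v ≠ 1` central and
let `Z` be the subgroup generated by its `H`-orbit; `Z` is central, and since `H` is abelian
every element fixing `v` fixes `Z`. By induction some `x̄ ∈ N ⧸ Z` has stabilizer
`S = C_H(N ⧸ Z)`. As `Z` is abelian of order coprime to `|S|`, `H¹(S, Z) = 1`, so `x̄` lifts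
to an `S`-fixed `x`, and `n₀ = x v` works: an `h` fixing `n₀` fixes `x̄`, hence lies in `S`,
hence fixes `x` and so `v` and `Z`; acting trivially on `Z` and on `N ⧸ Z`, the `p'`-element
`h` acts trivially on `N`.
-/

open groupCohomology MulAction

theorem isMulCoboundary₁_of_isMulCocycle₁_of_coprime {G M : Type*} [Group G] [Finite G]
    [CommGroup M] [MulDistribMulAction G M] (hcop : (Nat.card M).Coprime (Nat.card G))
    {f : G → M} (hf : IsMulCocycle₁ f) : IsMulCoboundary₁ f := by
  classical
  have := Fintype.ofFinite G
  set B := ∏ t, f t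
  have hpow (g : G) : f g ^ Nat.card G = B / g • B := by
    have hB : ∏ t, f (g * t) = B := Fintype.prod_equiv (Equiv.mulLeft g) _ _ fun _ => rfl
    rw [Finset.prod_congr rfl fun t _ => hf g t, Finset.prod_mul_distrib, ← Finset.smul_prod',
      Finset.prod_const, Finset.card_univ, ← Nat.card_eq_fintype_card] at hB
    exact eq_div_of_mul_eq'' hB
  refine ⟨(powCoprime hcop).symm B⁻¹, fun g => (powCoprime hcop).injective ?_⟩
  have hroot : (powCoprime hcop).symm B⁻¹ ^ Nat.card G = B⁻¹ :=
    (powCoprime hcop).apply_symm_apply _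
  simp only [powCoprime_apply, div_pow, ← smul_pow', hroot, hpow, smul_inv', inv_div_inv]

theorem stabilizer_eq_fixingSubgroup_univ_iff {M α : Type*} [Group M] [MulAction M α] {a : α} :
    stabilizer M a = fixingSubgroup M (Set.univ : Set α) ↔
      stabilizer M a ≤ fixingSubgroup M (Set.univ : Set α) :=
  ⟨le_of_eq, fun h => h.antisymm fun _ hm => (mem_fixingSubgroup_iff M).mp hm a trivial⟩

section Action

variable {H N : Type*} [Group H] [Group N] [MulDistribMulAction H N]

theorem smul_mem_center (h : H) {c : N} (hc : c ∈ Subgroup.center N) :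
    h • c ∈ Subgroup.center N := by
  rw [Subgroup.mem_center_iff] at hc ⊢
  intro m
  obtain ⟨m, rfl⟩ : ∃ m', h • m' = m := ⟨h⁻¹ • m, smul_inv_smul h m⟩
  rw [← smul_mul', ← smul_mul', hc]

theorem smul_mem_closure_orbit (h : H) (v : N) {w : N}
    (hw : w ∈ Subgroup.closure (orbit H v)) :
    h • w ∈ Subgroup.closure (orbit H v) := by
  refine (Subgroup.closure_le
    (K := (Subgroup.closure _).comap (MulDistribMulAction.toMonoidHom N h))).mpr ?_ hw
  intro u hu
  exact Subgroup.subset_closure (mem_orbit_of_mem_orbit h hu)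

abbrev Subgroup.mulDistribMulActionOfSMulMem (Z : Subgroup N)
    (hZ : ∀ (h : H), ∀ z ∈ Z, h • z ∈ Z) : MulDistribMulAction H Z where
  smul h z := ⟨h • (z : N), hZ h z z.2⟩
  one_smul z := Subtype.ext (one_smul H (z : N))
  mul_smul a b z := Subtype.ext (mul_smul a b (z : N))
  smul_mul h a b := Subtype.ext (smul_mul' h (a : N) b)
  smul_one h := Subtype.ext (smul_one h)

abbrev QuotientGroup.mulDistribMulActionOfSMulMem (Z : Subgroup N) [Z.Normal]
    (hZ : ∀ (h : H), ∀ z ∈ Z, h • z ∈ Z) : MulDistribMulAction H (N ⧸ Z) where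
  smul h := QuotientGroup.map Z Z (MulDistribMulAction.toMonoidHom N h) (hZ h)
  one_smul := by rintro ⟨n⟩; exact congrArg _ (one_smul H n)
  mul_smul a b := by rintro ⟨n⟩; exact congrArg _ (mul_smul a b n)
  smul_mul h := map_mul _
  smul_one h := map_one _

theorem eq_one_of_smul_eq_mul {h : H} {n w : N} (hn : h • n = n * w) (hw : h • w = w)
    (hcop : (orderOf h).Coprime (Nat.card N)) : w = 1 := by
  have hiter (j : ℕ) : h ^ j • n = n * w ^ j := by
    induction j with
    | zero => simp
    | succ j ih =>
      rw [pow_succ', mul_smul, ih, smul_mul', hn, smul_pow', hw, mul_assoc, ← pow_succ']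
  have hord : w ^ orderOf h = 1 := by
    simpa [pow_orderOf_eq_one] using (hiter (orderOf h)).symm
  simpa [hcop.gcd_eq_one] using pow_gcd_eq_one.mpr ⟨hord, pow_card_eq_one' (G := N)⟩

open scoped IsMulCommutative in
theorem exists_smul_mul_eq_self_of_le_center (S : Subgroup H) [Finite S] {Z : Subgroup N}
    (hZc : Z ≤ Subgroup.center N) (hZH : ∀ (h : H), ∀ z ∈ Z, h • z ∈ Z)
    (hcop : (Nat.card Z).Coprime (Nat.card S)) {x : N} (hx : ∀ s ∈ S, x⁻¹ * (s • x) ∈ Z) :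
    ∃ c ∈ Z, ∀ s ∈ S, s • (x * c) = x * c := by
  let _ := Z.mulDistribMulActionOfSMulMem hZH
  have : IsMulCommutative Z :=
    Subgroup.le_centralizer_iff_isMulCommutative.mp
      (hZc.trans (Subgroup.center_le_centralizer (Z : Set N)))
  let f : S → Z := fun s => ⟨x⁻¹ * (s • x), hx s s.2⟩
  have hf : IsMulCocycle₁ f := fun s t => by
    rw [mul_comm]
    apply Subtype.ext
    show x⁻¹ * ((s * t : H) • x) = x⁻¹ * (s • x) * (s • (x⁻¹ * (t • x)))
    rw [smul_mul', smul_inv', mul_smul, mul_assoc, mul_inv_cancel_left]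
    rfl
  obtain ⟨c, hc⟩ := isMulCoboundary₁_of_isMulCocycle₁_of_coprime hcop hf
  refine ⟨(c⁻¹ : Z), (c⁻¹ : Z).2, fun s hs => ?_⟩
  have hsx : s • x = x * ((s • c / c : Z) : N) := by
    have hcs : s • c / c = f ⟨s, hs⟩ := hc ⟨s, hs⟩
    rw [hcs, mul_inv_cancel_left]
    rfl
  rw [smul_mul']
  show s • x * ((s • c⁻¹ : Z) : N) = x * (c⁻¹ : Z)
  rw [hsx, mul_assoc, ← Subgroup.coe_mul, smul_inv', div_eq_mul_inv, mul_inv_cancel_comm]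

theorem exists_stabilizer_eq_fixingSubgroup_of_quotient [Finite H] {Z : Subgroup N} [Z.Normal]
    [MulDistribMulAction H (N ⧸ Z)] (hmk : ∀ (h : H) (n : N), h • (n : N ⧸ Z) = ↑(h • n))
    (hZc : Z ≤ Subgroup.center N) (hcop : (Nat.card H).Coprime (Nat.card N)) {v : N}
    (hvZ : v ∈ Z) (hv : stabilizer H v ≤ fixingSubgroup H (Z : Set N))
    {x : N ⧸ Z} (hx : stabilizer H x = fixingSubgroup H (Set.univ : Set (N ⧸ Z))) :
    ∃ n₀ : N, stabilizer H n₀ = fixingSubgroup H (Set.univ : Set N) := by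
  set S := fixingSubgroup H (Set.univ : Set (N ⧸ Z))
  have hfix_iff (h : H) (n : N) : h • (n : N ⧸ Z) = n ↔ n⁻¹ * (h • n) ∈ Z := by
    rw [hmk, eq_comm, QuotientGroup.eq]
  have hZH (h : H) (z : N) (hz : z ∈ Z) : h • z ∈ Z := by
    rw [← QuotientGroup.eq_one_iff, ← hmk, (QuotientGroup.eq_one_iff z).mpr hz, smul_one]
  obtain ⟨x, rfl⟩ := QuotientGroup.mk_surjective x
  have hxS (s : H) (hs : s ∈ S) : x⁻¹ * (s • x) ∈ Z := by
    rw [← hx, mem_stabilizer_iff] at hs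
    exact (hfix_iff s x).mp hs
  have hcopZS : (Nat.card Z).Coprime (Nat.card S) :=
    (hcop.symm.coprime_dvd_left (Subgroup.card_subgroup_dvd_card Z)).coprime_dvd_right
      (Subgroup.card_subgroup_dvd_card S)
  obtain ⟨c, hcZ, hc⟩ := exists_smul_mul_eq_self_of_le_center S hZc hZH hcopZS hxS
  refine ⟨x * c * v, stabilizer_eq_fixingSubgroup_univ_iff.mpr fun h hfix => ?_⟩
  rw [mem_stabilizer_iff] at hfix
  have hmkx : ((x * c * v : N) : N ⧸ Z) = x := by
    rw [QuotientGroup.mk_mul, QuotientGroup.mk_mul, (QuotientGroup.eq_one_iff c).mpr hcZ,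
      (QuotientGroup.eq_one_iff v).mpr hvZ, mul_one, mul_one]
  have hS : h ∈ S := by
    rw [← hx, mem_stabilizer_iff, ← hmkx, hmk, hfix]
  have hvfix : h • v = v := by
    rw [smul_mul', hc h hS] at hfix
    exact mul_left_cancel hfix
  have hZfix := (mem_fixingSubgroup_iff H).mp (hv hvfix)
  refine (mem_fixingSubgroup_iff H).mpr fun n _ => ?_
  have hn := (hfix_iff h n).mp ((mem_fixingSubgroup_iff H).mp hS _ trivial)
  have hw := eq_one_of_smul_eq_mul (mul_inv_cancel_left n (h • n)).symm (hZfix _ hn)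
    (hcop.coprime_dvd_left (orderOf_dvd_natCard h))
  exact (inv_mul_eq_one.mp hw).symm

end Action

theorem smul_eq_self_of_mem_closure_orbit {H N : Type*} [CommGroup H] [Group N]
    [MulDistribMulAction H N] {h : H} {v w : N} (hv : h • v = v)
    (hw : w ∈ Subgroup.closure (orbit H v)) : h • w = w := by
  refine (Subgroup.closure_le
    (K := (MulDistribMulAction.toMonoidHom N h).eqLocus (MonoidHom.id N))).mpr ?_ hw
  rintro _ ⟨g, rfl⟩
  show h • g • v = g • v
  rw [smul_smul, mul_comm, ← smul_smul, hv]

theorem exists_stabilizer_eq_fixingSubgroup {H : Type*} [CommGroup H] [Finite H] (N : Type*)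
    [Group N] [Finite N] [Group.IsNilpotent N] [MulDistribMulAction H N]
    (hcop : (Nat.card H).Coprime (Nat.card N)) :
    ∃ n₀ : N, stabilizer H n₀ = fixingSubgroup H (Set.univ : Set N) := by
  induction hn : Nat.card N using Nat.strong_induction_on generalizing N with
  | _ k ih =>
  rcases subsingleton_or_nontrivial N with hN | hN
  · exact ⟨1, stabilizer_eq_fixingSubgroup_univ_iff.mpr fun _ _ =>
      (mem_fixingSubgroup_iff H).mpr fun _ _ => Subsingleton.elim _ _⟩
  obtain ⟨v, hvc, hv1⟩ :=
    (Subgroup.bot_or_exists_ne_one _).resolve_left (Group.IsNilpotent.center_ne_bot N)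
  set Z := Subgroup.closure (orbit H v)
  have hZc : Z ≤ Subgroup.center N := by
    rw [Subgroup.closure_le]
    rintro _ ⟨g, rfl⟩
    exact smul_mem_center g hvc
  have hvZ : v ∈ Z := Subgroup.subset_closure (mem_orbit_self v)
  have : Z.Normal := ⟨fun z hz g => by
    rw [(Subgroup.mem_center_iff.mp (hZc hz) g), mul_inv_cancel_right]
    exact hz⟩
  let _ := QuotientGroup.mulDistribMulActionOfSMulMem Z fun h _ => smul_mem_closure_orbit h v
  have hlt : Nat.card (N ⧸ Z) < k := by
    have hZ : 1 < Nat.card Z :=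
      Finite.one_lt_card_iff_nontrivial.mpr (Z.nontrivial_iff_exists_ne_one.mpr ⟨v, hvZ, hv1⟩)
    rw [← hn, Subgroup.card_eq_card_quotient_mul_card_subgroup Z]
    exact lt_mul_of_one_lt_right Nat.card_pos hZ
  obtain ⟨x, hx⟩ :=
    ih _ hlt (N ⧸ Z) (hcop.coprime_dvd_right (Subgroup.card_quotient_dvd_card Z)) rfl
  exact exists_stabilizer_eq_fixingSubgroup_of_quotient (fun _ _ => rfl) hZc (hn ▸ hcop) hvZ
    (fun _ hh => (mem_fixingSubgroup_iff H).mpr fun _ => smul_eq_self_of_mem_closure_orbit hh) hx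

/-- If a finite abelian `p'`-group `H` acts on a finite `p`-group `N`, then
`C_H(n₀) = C_H(N)` for some `n₀ ∈ N`. -/
theorem stmt_1 {p : ℕ} (hp : p.Prime) (N : Type*) [Group N] [Finite N]
    (hN : IsPGroup p N) (H : Type*) [CommGroup H] [Finite H]
    (hH : Nat.Coprime (Nat.card H) p)
    [MulDistribMulAction H N] :
    ∃ n₀ : N, ∀ h : H, h • n₀ = n₀ ↔ ∀ n : N, h • n = n := by
  have := Fact.mk hp
  have := hN.isNilpotent
  obtain ⟨k, hk⟩ := IsPGroup.iff_card.mp hN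
  obtain ⟨n₀, hn₀⟩ := exists_stabilizer_eq_fixingSubgroup (H := H) N (hk ▸ hH.pow_right k)
  refine ⟨n₀, fun h => ?_⟩
  simpa [mem_fixingSubgroup_iff] using SetLike.ext_iff.mp hn₀ h
end

section
/- If a group G has an abelian subgroup of index 2, then every class-preserving automorphism of G is an inner automorphism. -/
/-- A group with an abelian subgroup of index 2 has only inner
class-preserving automorphisms. -/
theorem stmt_2 (G : Type*) [Group G] (A : Subgroup G)
    (hA : A.index = 2) (hab : ∀ a ∈ A, ∀ b ∈ A, a * b = b * a)
    (σ : MulAut G) (hσ : ∀ g : G, IsConj g (σ g)) :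
    ∃ h : G, ∀ g : G, σ g = h * g * h⁻¹ := by
  have hne : A ≠ ⊤ := by
    intro h
    rw [h, Subgroup.index_top] at hA
    omega
  obtain ⟨t, ht⟩ : ∃ t, t ∉ A := by
    by_contra h
    push_neg at h
    exact hne ((Subgroup.eq_top_iff' A).2 h)
  obtain ⟨h, hh⟩ := isConj_iff.1 (hσ t)
  -- normalized automorphism
  set f : G → G := fun g => h⁻¹ * σ g * h with hf
  have hft : f t = t := by
    simp only [hf, ← hh]; group
  have hfmul : ∀ x y : G, f (x * y) = f x * f y := by
    intro x y
    simp only [hf, map_mul]; group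
  -- f is class preserving
  have hfc : ∀ g : G, ∃ c : G, c * g * c⁻¹ = f g := by
    intro g
    obtain ⟨c, hc⟩ := isConj_iff.1 (hσ g)
    exact ⟨h⁻¹ * c, by simp only [hf, ← hc]; group⟩
  -- membership facts
  have hmul := fun a b => (Subgroup.mul_mem_iff_of_index_two hA (a := a) (b := b))
  have htinv : t⁻¹ ∉ A := fun hx => ht (by simpa using A.inv_mem hx)
  have hconjA : ∀ a ∈ A, t * a * t⁻¹ ∈ A := by
    intro a ha
    have h1 : t * a ∉ A := by
      rw [hmul]; simp [ht, ha]
    rw [hmul]; simp [h1, htinv]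
  -- key dichotomy
  have hkey : ∀ a ∈ A, f a = a ∨ f a = t * a * t⁻¹ := by
    intro a ha
    obtain ⟨c, hc⟩ := hfc a
    by_cases hcA : c ∈ A
    · left
      rw [← hc]
      have := hab c hcA a ha
      rw [this]; group
    · right
      rw [← hc]
      have hb : c * t⁻¹ ∈ A := by rw [hmul]; simp [hcA, htinv]
      have hcomm := hab (c * t⁻¹) hb (t * a * t⁻¹) (hconjA a ha)
      have : c * a * c⁻¹ = (c * t⁻¹) * (t * a * t⁻¹) * (c * t⁻¹)⁻¹ := by group
      rw [this, hcomm]; group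
  by_cases hall : ∀ a ∈ A, f a = a
  · -- f = id
    refine ⟨h, fun g => ?_⟩
    have hfg : f g = g := by
      by_cases hg : g ∈ A
      · exact hall g hg
      · have hb : g * t⁻¹ ∈ A := by rw [hmul]; simp [hg, htinv]
        have : g = (g * t⁻¹) * t := by group
        rw [this, hfmul, hall _ hb, hft]
    have heq : h⁻¹ * σ g * h = g := hfg
    calc σ g = h * (h⁻¹ * σ g * h) * h⁻¹ := by group
    _ = h * g * h⁻¹ := by rw [heq]
  · push_neg at hall
    obtain ⟨a₀, ha₀, hfa₀⟩ := hall
    have hfa₀' : f a₀ = t * a₀ * t⁻¹ := (hkey a₀ ha₀).resolve_left hfa₀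
    have hallA : ∀ a ∈ A, f a = t * a * t⁻¹ := by
      intro b hb
      rcases hkey b hb with h1 | h1
      · -- show b = t * b * t⁻¹
        rcases hkey (a₀ * b) (A.mul_mem ha₀ hb) with h2 | h2
        · exfalso
          rw [hfmul, hfa₀', h1] at h2
          exact hfa₀ (by rw [hfa₀', mul_right_cancel h2])
        · rw [hfmul, hfa₀', h1] at h2
          have : b = t * b * t⁻¹ := by
            have h3 : t * a₀ * t⁻¹ * b = t * a₀ * t⁻¹ * (t * b * t⁻¹) := by
              rw [h2]; group
            exact mul_left_cancel h3
          rw [h1, ← this]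
      · exact h1
    refine ⟨h * t, fun g => ?_⟩
    have hfg : f g = t * g * t⁻¹ := by
      by_cases hg : g ∈ A
      · exact hallA g hg
      · have hb : g * t⁻¹ ∈ A := by rw [hmul]; simp [hg, htinv]
        have hgd : g = (g * t⁻¹) * t := by group
        rw [hgd, hfmul, hallA _ hb, hft]
        group
    have heq : h⁻¹ * σ g * h = t * g * t⁻¹ := hfg
    calc σ g = h * (h⁻¹ * σ g * h) * h⁻¹ := by group
    _ = h * (t * g * t⁻¹) * h⁻¹ := by rw [heq]
    _ = h * t * g * (h * t)⁻¹ := by group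
end

section
/- Every class-preserving automorphism of a finite metacyclic group (a group having a cyclic normal subgroup with cyclic quotient) is inner. -/
/-- Every class-preserving automorphism of a finite metacyclic group is inner. -/
theorem stmt_3 (G : Type*) [Group G] [Finite G] (N : Subgroup G) [N.Normal]
    (hN : IsCyclic N) (hQ : IsCyclic (G ⧸ N))
    (σ : MulAut G) (hσ : ∀ g : G, IsConj g (σ g)) :
    ∃ h : G, ∀ g : G, σ g = h * g * h⁻¹ := by
  obtain ⟨a, ha⟩ := hN.exists_generator
  obtain ⟨q, hq⟩ := hQ.exists_generator
  obtain ⟨b, rfl⟩ := QuotientGroup.mk_surjective q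
  have decomp : ∀ g : G, ∃ (j m : ℤ), g = b ^ j * (a : G) ^ m := by
    intro g
    obtain ⟨j, hj⟩ := Subgroup.mem_zpowers_iff.mp (hq (QuotientGroup.mk g))
    have hj' : ((b ^ j)⁻¹ * g) ∈ N := by
      rw [← QuotientGroup.eq]
      simpa using hj
    obtain ⟨m, hm⟩ := Subgroup.mem_zpowers_iff.mp (ha ⟨_, hj'⟩)
    refine ⟨j, m, ?_⟩
    have hm' : ((a : G)) ^ m = (b ^ j)⁻¹ * g := by
      have := congrArg (Subtype.val) hm
      simpa using this
    rw [hm']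
    group
  obtain ⟨c, hc⟩ := isConj_iff.mp (hσ b)
  obtain ⟨x, hx⟩ := isConj_iff.mp (hσ (a : G))
  obtain ⟨j, m, hy⟩ := decomp (c⁻¹ * x)
  refine ⟨c * b ^ j, fun g => ?_⟩
  obtain ⟨k, i, rfl⟩ := decomp g
  have hb : σ b = c * b * c⁻¹ := hc.symm
  have hax : σ (a : G) = (c * b ^ j) * (a : G) * (c * b ^ j)⁻¹ := by
    have hxval : x = c * (b ^ j * (a : G) ^ m) := by
      rw [← hy]; group
    rw [← hx, hxval]
    group
  have key : ∀ (u v : G) (n : ℤ), (u * v * u⁻¹) ^ n = u * v ^ n * u⁻¹ := fun u v n => by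
    simpa using (map_zpow (MulAut.conj u) v n).symm
  rw [map_mul, map_zpow, map_zpow, hb, hax, key, key]
  group
end

section
/- Let G be a group possessing a finite non-normal subgroup, and suppose the intersection R(G) of all finite non-normal subgroups of G is nontrivial. Then R(G) is a cyclic p-group for some prime p. -/
/-!
A finite non-normal subgroup `H` of least order has all its proper subgroups normal in `G`.
Such an `H` is cyclic: otherwise it is the union of the proper subgroups `⟨x⟩`, `x ∈ H`, and is
normal. Its generator `g` has prime power order: otherwise two distinct primes `p, q` divide the
order, `⟨g ^ p⟩` and `⟨g ^ q⟩` are proper, hence normal, and by Bézout they generate `⟨g⟩`.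
As `R(G) ≤ H`, `R(G)` is a cyclic `p`-group.
-/

open Subgroup

theorem Nat.exists_primes_ne_dvd_of_not_isPrimePow {n : ℕ} (hn : n ≠ 1) (h : ¬IsPrimePow n) :
    ∃ p q, p.Prime ∧ q.Prime ∧ p ≠ q ∧ p ∣ n ∧ q ∣ n := by
  rcases eq_or_ne n 0 with rfl | hn0
  · exact ⟨2, 3, Nat.prime_two, Nat.prime_three, by decide, dvd_zero 2, dvd_zero 3⟩
  obtain ⟨p, hp, q, hq, hpq⟩ := (Nat.not_isPrimePow_iff_nontrivial_of_two_le (by omega)).mp h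
  exact ⟨p, q, Nat.prime_of_mem_primeFactors hp, Nat.prime_of_mem_primeFactors hq, hpq,
    Nat.dvd_of_mem_primeFactors hp, Nat.dvd_of_mem_primeFactors hq⟩

namespace Subgroup

variable {G : Type*} [Group G]

theorem card_lt_card_of_lt {H K : Subgroup G} [Finite K] (h : H < K) : Nat.card H < Nat.card K :=
  (card_le_of_le h.le).lt_of_ne fun hcard => h.ne (eq_of_le_of_card_ge h.le hcard.ge)

theorem normal_of_forall_zpowers_normal {H : Subgroup G} (h : ∀ x ∈ H, (zpowers x).Normal) :
    H.Normal :=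
  ⟨fun x hx g => zpowers_le.mpr hx ((h x hx).conj_mem x (mem_zpowers x) g)⟩

theorem mem_zpowers_pow_sup_zpowers_pow {m k : ℕ} (hmk : m.Coprime k) (g : G) :
    g ∈ zpowers (g ^ m) ⊔ zpowers (g ^ k) := by
  have hg : g = (g ^ m) ^ m.gcdA k * (g ^ k) ^ m.gcdB k := by
    rw [← zpow_natCast, ← zpow_natCast, ← zpow_mul, ← zpow_mul, ← zpow_add, ← Nat.gcd_eq_gcd_ab,
      hmk.gcd_eq_one, Nat.cast_one, zpow_one]
  have hmem : (g ^ m) ^ m.gcdA k * (g ^ k) ^ m.gcdB k ∈ zpowers (g ^ m) ⊔ zpowers (g ^ k) :=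
    mul_mem (mem_sup_left (zpow_mem (mem_zpowers _) _)) (mem_sup_right (zpow_mem (mem_zpowers _) _))
  rwa [← hg] at hmem

theorem zpowers_pow_lt_of_prime_dvd_orderOf {g : G} {p : ℕ} (hp : p.Prime) (hpg : p ∣ orderOf g) :
    zpowers (g ^ p) < zpowers g := by
  refine (zpowers_le.mpr (pow_mem (mem_zpowers g) p)).lt_of_ne fun h => ?_
  have hcop : p.gcd (orderOf g) = 1 := mem_zpowers_pow_iff.mp (h ▸ mem_zpowers g)
  rw [Nat.gcd_eq_left hpg] at hcop
  exact hp.one_lt.ne' hcop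

theorem exists_zpowers_eq_of_forall_lt_normal {H : Subgroup G} (hH : ¬H.Normal)
    (hlt : ∀ K < H, K.Normal) : ∃ g, zpowers g = H := by
  by_contra! hcyc
  exact hH (normal_of_forall_zpowers_normal fun x hx =>
    hlt _ ((zpowers_le.mpr hx).lt_of_ne (hcyc x)))

theorem isPrimePow_orderOf_of_forall_lt_normal {g : G} (hg : ¬(zpowers g).Normal)
    (hlt : ∀ K < zpowers g, K.Normal) : IsPrimePow (orderOf g) := by
  by_contra hpow
  have hg1 : orderOf g ≠ 1 := fun h1 => hg (by
    rw [orderOf_eq_one_iff.mp h1, zpowers_one_eq_bot]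
    infer_instance)
  obtain ⟨p, q, hp, hq, hpq, hpg, hqg⟩ := Nat.exists_primes_ne_dvd_of_not_isPrimePow hg1 hpow
  have hltp := zpowers_pow_lt_of_prime_dvd_orderOf hp hpg
  have hltq := zpowers_pow_lt_of_prime_dvd_orderOf hq hqg
  have := hlt _ hltp
  have := hlt _ hltq
  have hsup : zpowers g = zpowers (g ^ p) ⊔ zpowers (g ^ q) :=
    le_antisymm (zpowers_le.mpr (mem_zpowers_pow_sup_zpowers_pow
      ((Nat.coprime_primes hp hq).mpr hpq) g)) (sup_le hltp.le hltq.le)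
  exact hg (hsup ▸ inferInstance)

theorem exists_prime_isCyclic_isPGroup_of_forall_lt_normal {H : Subgroup G} (hH : ¬H.Normal)
    (hlt : ∀ K < H, K.Normal) : ∃ p, p.Prime ∧ IsCyclic H ∧ IsPGroup p H := by
  obtain ⟨g, rfl⟩ := exists_zpowers_eq_of_forall_lt_normal hH hlt
  obtain ⟨p, n, hp, -, hpn⟩ :=
    (isPrimePow_nat_iff _).mp (isPrimePow_orderOf_of_forall_lt_normal hH hlt)
  exact ⟨p, hp, inferInstance, IsPGroup.of_card (by rw [Nat.card_zpowers, hpn])⟩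

end Subgroup

theorem stmt_8_general (G : Type*) [Group G]
    (S : Set (Subgroup G)) (hS : S = {H : Subgroup G | (H : Set G).Finite ∧ ¬ H.Normal})
    (hne : S.Nonempty) :
    ∃ p : ℕ, p.Prime ∧ ((sInf S : Subgroup G) : Set G).Finite ∧
      IsCyclic (sInf S : Subgroup G) ∧ IsPGroup p (sInf S : Subgroup G) := by
  obtain ⟨H, hHS, hmin⟩ :=
    (wellFounded_lt.onFun (f := fun K : Subgroup G => Nat.card K)).has_min S hne
  have hRH : sInf S ≤ H := sInf_le hHS
  rw [hS] at hHS hmin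
  obtain ⟨hHfin, hHnn⟩ := hHS
  have := hHfin.to_subtype
  have hlt : ∀ K < H, K.Normal := fun K hKH => by
    by_contra hK
    exact hmin K ⟨hHfin.subset hKH.le, hK⟩ (card_lt_card_of_lt hKH)
  obtain ⟨p, hp, hcyc, hpgrp⟩ := exists_prime_isCyclic_isPGroup_of_forall_lt_normal hHnn hlt
  exact ⟨p, hp, hHfin.subset hRH, isCyclic_of_le hRH, hpgrp.to_le hRH⟩

/-- If a group `G` has a finite non-normal subgroup and the intersection `R(G)`
of all finite non-normal subgroups of `G` is nontrivial, then `R(G)` is a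
cyclic `p`-group for some prime `p`. -/
theorem stmt_8 (G : Type*) [Group G]
    (S : Set (Subgroup G)) (hS : S = {H : Subgroup G | (H : Set G).Finite ∧ ¬ H.Normal})
    (hne : S.Nonempty) (hR : sInf S ≠ ⊥) :
    ∃ p : ℕ, p.Prime ∧ ((sInf S : Subgroup G) : Set G).Finite ∧
      IsCyclic (sInf S : Subgroup G) ∧ IsPGroup p (sInf S : Subgroup G) :=
  stmt_8_general G S hS hne
end

section
/- Let G be a group possessing a finite non-normal subgroup such that R(G), the intersection of all finite non-normal subgroups, is a nontrivial cyclic p-group for a prime p. Then for any prime q ≠ p, the set T_q of all q-elements of G forms a normal q-subgroup of G, all of whose subgroups are normal in G. -/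
/-- Suppose `R(G)`, the intersection of all finite non-normal subgroups of `G`, is
a nontrivial cyclic `p`-group. Then for any prime `q ≠ p` the `q`-elements of `G`
form a normal `q`-subgroup of `G` all of whose subgroups are normal in `G`. -/
theorem stmt_9 (G : Type*) [Group G] {p q : ℕ} (hp : p.Prime) (hq : q.Prime)
    (hqp : q ≠ p)
    (S : Set (Subgroup G)) (hS : S = {H : Subgroup G | (H : Set G).Finite ∧ ¬ H.Normal})
    (hne : S.Nonempty) (hR : sInf S ≠ ⊥)
    (hcyc : IsCyclic (sInf S : Subgroup G)) (hPG : IsPGroup p (sInf S : Subgroup G)) :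
    ∃ T : Subgroup G, (T : Set G) = {g : G | ∃ n : ℕ, orderOf g = q ^ n} ∧
      T.Normal ∧ IsPGroup q T ∧ ∀ U : Subgroup G, U ≤ T → U.Normal := by
  -- Step 1: every cyclic subgroup generated by a `q`-element is normal in `G`.
  have hnorm : ∀ g : G, (∃ n : ℕ, orderOf g = q ^ n) → (Subgroup.zpowers g).Normal := by
    rintro g ⟨n, hn⟩
    by_contra hN
    have hfo : IsOfFinOrder g := by
      rw [← orderOf_pos_iff, hn]
      exact pow_pos hq.pos n
    have hmemS : Subgroup.zpowers g ∈ S := by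
      rw [hS]; exact ⟨hfo.finite_zpowers, hN⟩
    have hle : sInf S ≤ Subgroup.zpowers g := sInf_le hmemS
    obtain ⟨⟨x, hx⟩, hx1⟩ := Subgroup.ne_bot_iff_exists_ne_one.mp hR
    obtain ⟨k, hk⟩ := hPG ⟨x, hx⟩
    have hxo1 : orderOf x ∣ p ^ k := by
      rw [orderOf_dvd_iff_pow_eq_one]
      exact congrArg (Subgroup.subtype _) hk
    have hxo2 : orderOf x ∣ q ^ n := hn ▸ orderOf_dvd_of_mem_zpowers (hle hx)
    have hcop : Nat.Coprime (p ^ k) (q ^ n) :=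
      ((Nat.coprime_primes hp hq).mpr fun h => hqp h.symm).pow k n
    have : orderOf x = 1 := Nat.eq_one_of_dvd_coprimes hcop hxo1 hxo2
    exact hx1 (Subtype.ext (orderOf_eq_one_iff.mp this))
  -- q-power order elements form a subgroup
  have hpg : ∀ g : G, (∃ n : ℕ, orderOf g = q ^ n) → IsPGroup q (Subgroup.zpowers g) := by
    rintro g ⟨n, hn⟩ ⟨x, hx⟩
    refine ⟨n, ?_⟩
    have : orderOf x ∣ q ^ n := hn ▸ orderOf_dvd_of_mem_zpowers hx
    ext
    simpa using orderOf_dvd_iff_pow_eq_one.mp this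
  have hmul : ∀ a b : G, (∃ n : ℕ, orderOf a = q ^ n) → (∃ n : ℕ, orderOf b = q ^ n) →
      ∃ n : ℕ, orderOf (a * b) = q ^ n := by
    intro a b ha hb
    haveI := hnorm b hb
    have hsup : IsPGroup q (Subgroup.zpowers a ⊔ Subgroup.zpowers b : Subgroup G) :=
      IsPGroup.to_sup_of_normal_right (hpg a ha) (hpg b hb)
    have hmem : a * b ∈ Subgroup.zpowers a ⊔ Subgroup.zpowers b :=
      mul_mem (SetLike.le_def.mp le_sup_left (Subgroup.mem_zpowers a))
        (SetLike.le_def.mp le_sup_right (Subgroup.mem_zpowers b))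
    obtain ⟨k, hk⟩ := hsup ⟨a * b, hmem⟩
    have : orderOf (a * b) ∣ q ^ k := by
      rw [orderOf_dvd_iff_pow_eq_one]
      exact congrArg (Subgroup.subtype _) hk
    obtain ⟨m, _, hm⟩ := (Nat.dvd_prime_pow hq).mp this
    exact ⟨m, hm⟩
  refine ⟨{ carrier := {g : G | ∃ n : ℕ, orderOf g = q ^ n},
            one_mem' := ⟨0, by simp⟩,
            mul_mem' := fun {a b} ha hb => hmul a b ha hb,
            inv_mem' := fun {a} ha => by
              obtain ⟨n, hn⟩ := ha
              exact ⟨n, by rwa [orderOf_inv]⟩ }, rfl, ?_, ?_, ?_⟩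
  · constructor
    intro g hg c
    obtain ⟨n, hn⟩ := hg
    have h1 : (Subgroup.zpowers g).Normal := hnorm g ⟨n, hn⟩
    have h2 : c * g * c⁻¹ ∈ Subgroup.zpowers g := h1.conj_mem g (Subgroup.mem_zpowers g) c
    have h3 : orderOf (c * g * c⁻¹) ∣ q ^ n := hn ▸ orderOf_dvd_of_mem_zpowers h2
    obtain ⟨m, _, hm⟩ := (Nat.dvd_prime_pow hq).mp h3
    exact ⟨m, hm⟩
  · rintro ⟨x, hx⟩
    obtain ⟨n, hn⟩ := hx
    refine ⟨n, Subtype.ext ?_⟩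
    push_cast
    rw [← hn]
    exact pow_orderOf_eq_one x
  · intro U hU
    constructor
    intro u hu c
    have h1 : (Subgroup.zpowers u).Normal := hnorm u (hU hu)
    have h2 : c * u * c⁻¹ ∈ Subgroup.zpowers u := h1.conj_mem u (Subgroup.mem_zpowers u) c
    exact Subgroup.zpowers_le.mpr hu h2
end

section
/- Let G be a group with a finite non-normal subgroup such that R(G) (the intersection of all finite non-normal subgroups) is a nontrivial cyclic p-group, and let q ≠ p be an odd prime. Then the set of q-elements of G forms an abelian normal q-subgroup of G. -/
/-!
Every cyclic subgroup `⟨g⟩` of `q`-power order is normal: otherwise it is a finite non-normal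
subgroup, so it contains `R(G)`, and a nontrivial `p`-group cannot sit inside a `q`-group.

Two `q`-elements `x`, `y` then commute. Their commutator `c` lies in `⟨x⟩ ∩ ⟨y⟩`, hence commutes
with both, so `⟨x, y⟩` has class at most two. By induction on the orders, `x ^ q` commutes with
`y`, so `c ^ q = 1`. If `c ≠ 1`, then `⟨c⟩` is the subgroup of order `q` of both `⟨x⟩` and `⟨y⟩`,
so if `|y| = q ^ n ≤ |x|` some power `x ^ e` satisfies `(x ^ e) ^ N = y ^ (-N)` with
`N = q ^ (n - 1)`. The class-two power formula and `q ∣ (q ^ k).choose 2` (here `q` odd is needed: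
the quaternion group fails for `q = 2`) give `(y * x ^ e) ^ N = 1`, and the induction hypothesis
applied to `x` and `y * x ^ e` finishes. Pairwise commuting `q`-elements form a subgroup.
-/

open Subgroup
open scoped commutatorElement

section Commutators

variable {G : Type*} [Group G]

theorem mul_eq_commutatorElement_mul (a b : G) : a * b = ⁅a, b⁆ * (b * a) := by
  simp [commutatorElement_def, mul_assoc]

theorem commutatorElement_pow_left {x y : G} (h : Commute x ⁅x, y⁆) (n : ℕ) :
    ⁅x ^ n, y⁆ = ⁅x, y⁆ ^ n := by
  induction n with
  | zero => simp
  | succ n ih =>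
    rw [pow_succ', commutatorElement_mul_left_eq_conj_mul, ih, (h.pow_right n).eq,
      mul_inv_cancel_right, pow_succ]

/-- The Hall–Petrescu formula in class two. -/
theorem mul_pow_eq_commutatorElement_pow_choose_mul {u v : G} (hu : Commute u ⁅v, u⁆)
    (hv : Commute v ⁅v, u⁆) (n : ℕ) :
    (u * v) ^ n = ⁅v, u⁆ ^ n.choose 2 * (u ^ n * v ^ n) := by
  induction n with
  | zero => simp
  | succ n ih =>
    set d := ⁅v, u⁆
    have hvu : v ^ n * u = d ^ n * (u * v ^ n) := by
      rw [mul_eq_commutatorElement_mul, commutatorElement_pow_left hv]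
    calc (u * v) ^ (n + 1) = d ^ n.choose 2 * (u ^ n * (v ^ n * u) * v) := by
          rw [pow_succ, ih]; simp only [mul_assoc]
      _ = d ^ n.choose 2 * (u ^ n * d ^ n) * (u * v ^ n * v) := by
          rw [hvu]; simp only [mul_assoc]
      _ = d ^ (n + 1).choose 2 * (u ^ (n + 1) * v ^ (n + 1)) := by
          rw [(hu.pow_pow n n).eq, Nat.choose_succ_succ' n 1, Nat.choose_one_right, add_comm,
            pow_add, pow_succ, pow_succ]
          simp only [mul_assoc]

end Commutators

theorem Nat.dvd_choose_two_pow_of_odd {q : ℕ} (hq : Odd q) (k : ℕ) : q ∣ (q ^ k).choose 2 := by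
  cases k with
  | zero => simp
  | succ k =>
    have h2 : 2 ∣ q ^ (k + 1) - 1 := (Nat.Odd.sub_odd hq.pow odd_one).two_dvd
    rw [Nat.choose_two_right, Nat.mul_div_assoc _ h2]
    exact dvd_mul_of_dvd_left (dvd_pow_self q k.succ_ne_zero) _

section Cyclic

variable {G : Type*} [Group G]

theorem commute_of_mem_zpowers {x c : G} (hc : c ∈ zpowers x) : Commute x c := by
  obtain ⟨k, rfl⟩ := mem_zpowers_iff.mp hc
  exact (Commute.refl x).zpow_right k

theorem exponent_ne_zero_of_orderOf_eq_pow {q k : ℕ} {g : G} (hg : orderOf g = q ^ k)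
    (h1 : g ≠ 1) : k ≠ 0 := by
  rintro rfl
  exact h1 (orderOf_eq_one_iff.mp (by rw [hg, pow_zero]))

theorem mem_zpowers_pow_of_pow_eq_one {g z : G} {e d : ℕ} (hg : orderOf g = e * d) (hd : d ≠ 0)
    (hz : z ∈ zpowers g) (hzd : z ^ d = 1) : z ∈ zpowers (g ^ e) := by
  obtain ⟨k, rfl⟩ := mem_zpowers_iff.mp hz
  have hdvd : ((e * d : ℕ) : ℤ) ∣ k * d := by
    rw [← hg, orderOf_dvd_iff_zpow_eq_one, zpow_mul, zpow_natCast, hzd]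
  obtain ⟨t, rfl⟩ : (e : ℤ) ∣ k := by
    push_cast at hdvd
    exact Int.dvd_of_mul_dvd_mul_right (by exact_mod_cast hd) hdvd
  exact ⟨t, by simp only [← zpow_natCast, ← zpow_mul]⟩

theorem mem_zpowers_of_mem_zpowers_of_pow_prime_eq_one {q : ℕ} {h c : G} (hq : q.Prime)
    (hh : h ^ q = 1) (hc : c ∈ zpowers h) (hc1 : c ≠ 1) : h ∈ zpowers c := by
  have := Fact.mk hq
  have hfin : IsOfFinOrder h := isOfFinOrder_iff_pow_eq_one.mpr ⟨q, hq.pos, hh⟩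
  obtain ⟨k, rfl⟩ := (Submonoid.mem_powers_iff _ _).mp (hfin.mem_powers_iff_mem_zpowers.mpr hc)
  have hh1 : h ≠ 1 := by rintro rfl; exact hc1 (one_pow k)
  have hqh : orderOf h = q := orderOf_eq_prime hh hh1
  have hk : ¬ q ∣ k := fun hqk ↦ hc1 <| orderOf_dvd_iff_pow_eq_one.mp <| hqh ▸ hqk
  rw [mem_zpowers_pow_iff, hqh]
  exact Nat.Coprime.symm ((Nat.Prime.coprime_iff_not_dvd hq).mpr hk)

theorem exists_pow_pow_eq_inv_pow {q m n : ℕ} {x y c : G} (hq : q.Prime)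
    (hx : orderOf x = q ^ m) (hy : orderOf y = q ^ n) (hnm : n ≤ m)
    (hcx : c ∈ zpowers x) (hcy : c ∈ zpowers y) (hc1 : c ≠ 1) (hcq : c ^ q = 1) :
    ∃ e : ℕ, (x ^ e) ^ q ^ (n - 1) = (y ^ q ^ (n - 1))⁻¹ := by
  have hn : n ≠ 0 := exponent_ne_zero_of_orderOf_eq_pow hy (by rintro rfl; simp [hc1] at hcy)
  set N := q ^ (n - 1)
  have hyN : orderOf y = N * q := by rw [hy, pow_sub_one_mul hn]
  have hxN : orderOf x = q ^ (m - n) * N * q := by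
    rw [hx, mul_assoc, pow_sub_one_mul hn, ← pow_add, Nat.sub_add_cancel hnm]
  have hyNq : (y ^ N) ^ q = 1 := by rw [← pow_mul, ← hyN, pow_orderOf_eq_one]
  -- `⟨c⟩ = ⟨y ^ N⟩`, the subgroup of order `q` of `⟨y⟩`
  have hyNx : (y ^ N)⁻¹ ∈ zpowers x := inv_mem <| zpowers_le.mpr hcx <|
    mem_zpowers_of_mem_zpowers_of_pow_prime_eq_one hq hyNq
      (mem_zpowers_pow_of_pow_eq_one hyN hq.ne_zero hcy hcq) hc1
  have hfin : IsOfFinOrder (x ^ (q ^ (m - n) * N)) :=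
    (orderOf_pos_iff.mp (hx ▸ pow_pos hq.pos m)).pow
  obtain ⟨k, hk⟩ := (Submonoid.mem_powers_iff _ _).mp <| hfin.mem_powers_iff_mem_zpowers.mpr <|
    mem_zpowers_pow_of_pow_eq_one hxN hq.ne_zero hyNx (by rw [inv_pow, hyNq, inv_one])
  exact ⟨q ^ (m - n) * k, by rw [← hk, ← pow_mul, ← pow_mul, mul_right_comm]⟩

end Cyclic

section PrimaryElements

variable {G : Type*} [Group G] {q : ℕ}

variable (G q) in
def primaryElements : Set G := {g | ∃ n : ℕ, orderOf g = q ^ n}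

theorem commute_of_forall_commute_of_lt (hq : q.Prime) (hodd : Odd q) {x y : G} {m n : ℕ}
    (hx : orderOf x = q ^ m) (hy : orderOf y = q ^ n) (hnm : n ≤ m)
    (hxN : (zpowers x).Normal) (hyN : (zpowers y).Normal)
    (ih : ∀ (x' y' : G) (m' n' : ℕ), m' + n' < m + n →
      orderOf x' = q ^ m' → orderOf y' = q ^ n' → Commute x' y') :
    Commute x y := by
  have hcx : ⁅x, y⁆ ∈ zpowers x := by
    rw [commutatorElement_def, mul_assoc, mul_assoc, ← mul_assoc y]
    exact mul_mem (mem_zpowers x) (hxN.conj_mem _ (inv_mem (mem_zpowers x)) y)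
  have hcy : ⁅x, y⁆ ∈ zpowers y :=
    mul_mem (hyN.conj_mem y (mem_zpowers y) x) (inv_mem (mem_zpowers y))
  set c := ⁅x, y⁆
  have hxc := commute_of_mem_zpowers hcx
  have hyc := commute_of_mem_zpowers hcy
  by_cases hc1 : c = 1
  · exact commutatorElement_eq_one_iff_commute.mp hc1
  have hm : m ≠ 0 := exponent_ne_zero_of_orderOf_eq_pow hx (by rintro rfl; simp [c] at hc1)
  have hn : n ≠ 0 := exponent_ne_zero_of_orderOf_eq_pow hy (by rintro rfl; simp [c] at hc1)
  -- `c ^ q = ⁅x ^ q, y⁆`, and `x ^ q` has smaller order than `x`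
  have hcq : c ^ q = 1 := by
    have hxq : (x ^ q) ^ q ^ (m - 1) = 1 := by
      rw [← pow_mul, mul_comm, pow_sub_one_mul hm, ← hx, pow_orderOf_eq_one]
    obtain ⟨i, hi, hxq⟩ := (Nat.dvd_prime_pow hq).mp (orderOf_dvd_of_pow_eq_one hxq)
    rw [← commutatorElement_pow_left hxc, commutatorElement_eq_one_iff_commute]
    exact ih _ _ i n (by omega) hxq hy
  obtain ⟨e, he⟩ := exists_pow_pow_eq_inv_pow hq hx hy hnm hcx hcy hc1 hcq
  have hyx : (y * x ^ e) ^ q ^ (n - 1) = 1 := by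
    have hd : ⁅x ^ e, y⁆ = c ^ e := commutatorElement_pow_left hxc e
    rw [mul_pow_eq_commutatorElement_pow_choose_mul (hd ▸ hyc.pow_right e)
      (hd ▸ (hxc.pow_right e).pow_left e), he, mul_inv_cancel, mul_one, hd, ← pow_mul]
    exact orderOf_dvd_iff_pow_eq_one.mp <| (orderOf_dvd_of_pow_eq_one hcq).trans <|
      dvd_mul_of_dvd_right (Nat.dvd_choose_two_pow_of_odd hodd _) e
  obtain ⟨n', hn', hyx⟩ := (Nat.dvd_prime_pow hq).mp (orderOf_dvd_of_pow_eq_one hyx)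
  simpa using (ih x _ m n' (by omega) hx hyx).mul_right ((Commute.refl x).pow_right e).inv_right

theorem commute_of_zpowers_normal (hq : q.Prime) (hodd : Odd q)
    (hnormal : ∀ g ∈ primaryElements G q, (zpowers g).Normal) :
    ∀ x ∈ primaryElements G q, ∀ y ∈ primaryElements G q, Commute x y := by
  suffices ∀ M m n (x y : G), m + n = M → orderOf x = q ^ m → orderOf y = q ^ n → Commute x y by
    rintro x ⟨m, hx⟩ y ⟨n, hy⟩
    exact this _ m n x y rfl hx hy
  intro M
  induction M using Nat.strong_induction_on with
  | _ M IH =>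
  intro m n x y hM hx hy
  wlog hnm : n ≤ m generalizing m n x y
  · exact (this n m y x (by omega) hy hx (by omega)).symm
  subst hM
  exact commute_of_forall_commute_of_lt hq hodd hx hy hnm (hnormal x ⟨m, hx⟩) (hnormal y ⟨n, hy⟩)
    fun x' y' m' n' hlt ↦ IH _ hlt m' n' x' y' rfl

theorem zpowers_normal_of_isPGroup_le [Fact q.Prime] {p : ℕ} [Fact p.Prime] (hqp : q ≠ p)
    {K : Subgroup G} (hK : IsPGroup p K) (hK1 : K ≠ ⊥)
    (hle : ∀ H : Subgroup G, (H : Set G).Finite → ¬ H.Normal → K ≤ H)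
    {g : G} (hg : g ∈ primaryElements G q) : (zpowers g).Normal := by
  obtain ⟨k, hk⟩ := hg
  by_contra hnormal
  have hfin : IsOfFinOrder g := orderOf_pos_iff.mp (hk ▸ pow_pos (Fact.out : q.Prime).pos k)
  have hgq : IsPGroup q (zpowers g) := IsPGroup.of_card (by rw [Nat.card_zpowers, hk])
  exact hK1 <| disjoint_of_le_iff_left_eq_bot (hle _ hfin.finite_zpowers hnormal) |>.mp <|
    IsPGroup.disjoint_of_ne p q hqp.symm K (zpowers g) hK hgq

def primarySubgroupOfCommute (hq : q.Prime)
    (hcomm : ∀ x ∈ primaryElements G q, ∀ y ∈ primaryElements G q, Commute x y) :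
    Subgroup G where
  carrier := primaryElements G q
  one_mem' := ⟨0, by simp⟩
  inv_mem' := fun ⟨n, hn⟩ ↦ ⟨n, by rwa [orderOf_inv]⟩
  mul_mem' {a b} ha hb := by
    have hab := hcomm a ha b hb
    obtain ⟨m, hm⟩ := ha
    obtain ⟨n, hn⟩ := hb
    have hdvd : orderOf (a * b) ∣ q ^ (m + n) := by
      rw [pow_add, ← hm, ← hn]
      exact hab.orderOf_mul_dvd_mul_orderOf
    obtain ⟨i, -, hi⟩ := (Nat.dvd_prime_pow hq).mp hdvd
    exact ⟨i, hi⟩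

theorem primarySubgroupOfCommute_normal (hq : q.Prime)
    (hcomm : ∀ x ∈ primaryElements G q, ∀ y ∈ primaryElements G q, Commute x y) :
    (primarySubgroupOfCommute hq hcomm).Normal where
  conj_mem a := fun ⟨n, hn⟩ g ↦ ⟨n, by rw [← MulAut.conj_apply, MulEquiv.orderOf_eq, hn]⟩

theorem isPGroup_primarySubgroupOfCommute (hq : q.Prime)
    (hcomm : ∀ x ∈ primaryElements G q, ∀ y ∈ primaryElements G q, Commute x y) :
    IsPGroup q (primarySubgroupOfCommute hq hcomm) :=
  fun g ↦
    let ⟨k, hk⟩ := g.2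
    ⟨k, by rw [← hk, Subgroup.orderOf_coe, pow_orderOf_eq_one]⟩

end PrimaryElements

theorem stmt_10_general (G : Type*) [Group G] {p q : ℕ} (hp : p.Prime) (hq : q.Prime)
    (hodd : Odd q) (hqp : q ≠ p)
    (S : Set (Subgroup G)) (hS : S = {H : Subgroup G | (H : Set G).Finite ∧ ¬ H.Normal})
    (hR : sInf S ≠ ⊥)
    (hPG : IsPGroup p (sInf S : Subgroup G)) :
    ∃ T : Subgroup G, (T : Set G) = {g : G | ∃ n : ℕ, orderOf g = q ^ n} ∧
      T.Normal ∧ IsPGroup q T ∧ ∀ x ∈ T, ∀ y ∈ T, x * y = y * x := by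
  have := Fact.mk hp
  have := Fact.mk hq
  have hcomm := commute_of_zpowers_normal hq hodd fun g ↦
    zpowers_normal_of_isPGroup_le hqp hPG hR fun H hfin hH ↦ sInf_le (hS ▸ ⟨hfin, hH⟩)
  exact ⟨primarySubgroupOfCommute hq hcomm, rfl, primarySubgroupOfCommute_normal hq hcomm,
    isPGroup_primarySubgroupOfCommute hq hcomm, fun x hx y hy ↦ hcomm x hx y hy⟩

/-- Suppose `R(G)`, the intersection of all finite non-normal subgroups of `G`, is
a nontrivial cyclic `p`-group, and let `q ≠ p` be an odd prime. Then the
`q`-elements of `G` form an abelian normal `q`-subgroup of `G`. -/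
theorem stmt_10 (G : Type*) [Group G] {p q : ℕ} (hp : p.Prime) (hq : q.Prime)
    (hodd : Odd q) (hqp : q ≠ p)
    (S : Set (Subgroup G)) (hS : S = {H : Subgroup G | (H : Set G).Finite ∧ ¬ H.Normal})
    (hne : S.Nonempty) (hR : sInf S ≠ ⊥)
    (hcyc : IsCyclic (sInf S : Subgroup G)) (hPG : IsPGroup p (sInf S : Subgroup G)) :
    ∃ T : Subgroup G, (T : Set G) = {g : G | ∃ n : ℕ, orderOf g = q ^ n} ∧
      T.Normal ∧ IsPGroup q T ∧ ∀ x ∈ T, ∀ y ∈ T, x * y = y * x :=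
  stmt_10_general G hp hq hodd hqp S hS hR hPG
end

section
/- Let G be a group such that R(G), the intersection of all finite non-normal subgroups of G, is defined and a nontrivial cyclic p-group. Then every finite normal subgroup N of G has a normal p-complement H (a normal subgroup of order coprime to p with p-power index in N), and H is a Dedekind group. -/
lemma aux_card_sup_dvd {G : Type*} [Group G] (A B : Subgroup G) [B.Normal]
    (hA : (A : Set G).Finite) (hB : (B : Set G).Finite) :
    Nat.card (A ⊔ B : Subgroup G) ∣ Nat.card A * Nat.card B := by
  haveI : Finite A := hA.to_subtype
  haveI : Finite B := hB.to_subtype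
  have hfin : ((A ⊔ B : Subgroup G) : Set G).Finite := by
    rw [Subgroup.mul_normal]
    exact hA.mul hB
  haveI : Finite (A ⊔ B : Subgroup G) := hfin.to_subtype
  have h1 : Nat.card (B.subgroupOf (A ⊔ B)) * (B.subgroupOf (A ⊔ B)).index
      = Nat.card (A ⊔ B : Subgroup G) := Subgroup.card_mul_index _
  have h5 : Nat.card (B.subgroupOf (A ⊔ B)) = Nat.card B :=
    Nat.card_congr (Subgroup.subgroupOfEquivOfLe (le_sup_right : B ≤ A ⊔ B)).toEquiv
  have h3 : (B.subgroupOf (A ⊔ B)).index = Nat.card (A ⧸ B.subgroupOf A) := by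
    rw [Subgroup.index_eq_card]
    exact (Nat.card_congr (QuotientGroup.quotientInfEquivProdNormalQuotient A B).toEquiv).symm
  have h4 : Nat.card (A ⧸ B.subgroupOf A) ∣ Nat.card A := by
    rw [← Subgroup.index_eq_card]
    exact Subgroup.index_dvd_card _
  rw [← h1, h5, h3, mul_comm (Nat.card A)]
  exact mul_dvd_mul_left _ h4

/-- If `R(G)`, the intersection of all finite non-normal subgroups of `G`, is a
nontrivial cyclic `p`-group, then every finite normal subgroup `N` of `G` has a
normal `p`-complement `H`, and `H` is a Dedekind group. -/
theorem stmt_11 (G : Type*) [Group G] {p : ℕ} (hp : p.Prime)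
    (S : Set (Subgroup G)) (hS : S = {H : Subgroup G | (H : Set G).Finite ∧ ¬ H.Normal})
    (hne : S.Nonempty) (hR : sInf S ≠ ⊥)
    (hcyc : IsCyclic (sInf S : Subgroup G)) (hPG : IsPGroup p (sInf S : Subgroup G))
    (N : Subgroup G) [N.Normal] (hNfin : (N : Set G).Finite) :
    ∃ H : Subgroup G, H ≤ N ∧ (H.subgroupOf N).Normal ∧
      Nat.Coprime (Nat.card H) p ∧ (∃ k : ℕ, (H.subgroupOf N).index = p ^ k) ∧
      ∀ K : Subgroup H, K.Normal := by
  haveI : Fact p.Prime := ⟨hp⟩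
  haveI : Finite N := hNfin.to_subtype
  -- Key: every finite subgroup of order not divisible by p is normal in G
  have key : ∀ K : Subgroup G, (K : Set G).Finite → ¬ p ∣ Nat.card K → K.Normal := by
    intro K hKfin hKcop
    by_contra hKn
    have hmem : K ∈ S := by rw [hS]; exact ⟨hKfin, hKn⟩
    have hle : sInf S ≤ K := sInf_le hmem
    haveI : Finite K := hKfin.to_subtype
    haveI : Finite (sInf S : Subgroup G) :=
      Finite.of_injective (Subgroup.inclusion hle) (Subgroup.inclusion_injective hle)
    obtain ⟨n, hn⟩ := IsPGroup.iff_card.mp hPG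
    have hn1 : Nat.card (sInf S : Subgroup G) ≠ 1 :=
      fun h => hR (Subgroup.card_eq_one.mp h)
    have hpd : p ∣ Nat.card (sInf S : Subgroup G) := by
      rcases Nat.eq_zero_or_pos n with h0 | h0
      · rw [h0, pow_zero] at hn; exact absurd hn hn1
      · exact hn ▸ dvd_pow_self p h0.ne'
    exact hKcop (hpd.trans (Subgroup.card_dvd_of_le hle))
  -- orders of elements of N are positive
  have hord : ∀ x : G, x ∈ N → 0 < orderOf x := by
    intro x hx
    have := orderOf_pos (⟨x, hx⟩ : N)
    rwa [Subgroup.orderOf_mk] at this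
  -- zpowers of p'-elements of N are normal in G
  have hzfin : ∀ x : G, x ∈ N → ((Subgroup.zpowers x : Subgroup G) : Set G).Finite :=
    fun x hx => hNfin.subset (Subgroup.zpowers_le.mpr hx)
  have hznorm : ∀ x : G, x ∈ N → ¬ p ∣ orderOf x → (Subgroup.zpowers x).Normal := by
    intro x hx hox
    exact key _ (hzfin x hx) (by rwa [Nat.card_zpowers])
  -- the p'-elements of N form a subgroup
  let H : Subgroup G :=
    { carrier := {x : G | x ∈ N ∧ ¬ p ∣ orderOf x}
      one_mem' := ⟨N.one_mem, by simpa using hp.one_lt.ne'⟩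
      inv_mem' := by
        rintro x ⟨hx, hox⟩
        exact ⟨N.inv_mem hx, by rwa [orderOf_inv]⟩
      mul_mem' := by
        rintro x y ⟨hx, hox⟩ ⟨hy, hoy⟩
        refine ⟨N.mul_mem hx hy, ?_⟩
        haveI := hznorm y hy hoy
        have hmem : x * y ∈ Subgroup.zpowers x ⊔ Subgroup.zpowers y :=
          mul_mem (Subgroup.mem_sup_left (Subgroup.mem_zpowers x))
            (Subgroup.mem_sup_right (Subgroup.mem_zpowers y))
        have hdvd : orderOf (x * y) ∣ Nat.card (Subgroup.zpowers x) * Nat.card (Subgroup.zpowers y) :=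
          (Subgroup.orderOf_dvd_natCard _ hmem).trans
            (aux_card_sup_dvd _ _ (hzfin x hx) (hzfin y hy))
        rw [Nat.card_zpowers, Nat.card_zpowers] at hdvd
        intro hpd
        rcases (Nat.Prime.dvd_mul hp).mp (hpd.trans hdvd) with h | h
        exacts [hox h, hoy h] }
  have hHle : H ≤ N := fun x hx => hx.1
  have hHfin : (H : Set G).Finite := hNfin.subset hHle
  haveI : Finite H := hHfin.to_subtype
  have hHnotdvd : ¬ p ∣ Nat.card H := by
    intro hdvd
    obtain ⟨g, hg⟩ := exists_prime_orderOf_dvd_card' p hdvd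
    have : orderOf (g : G) = p := by rw [Subgroup.orderOf_coe, hg]
    exact g.2.2 (this ▸ dvd_rfl)
  have hHnormal : H.Normal := key H hHfin hHnotdvd
  refine ⟨H, hHle, hHnormal.subgroupOf N, (hp.coprime_iff_not_dvd.mpr hHnotdvd).symm, ?_, ?_⟩
  · -- the quotient N / H is a p-group
    have hpg : IsPGroup p (N ⧸ H.subgroupOf N) := by
      intro g
      obtain ⟨n, rfl⟩ := QuotientGroup.mk_surjective g
      refine ⟨(orderOf (n : G)).factorization p, ?_⟩
      rw [← QuotientGroup.mk_pow, QuotientGroup.eq_one_iff]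
      have hnN : (n : G) ∈ N := n.2
      refine ⟨N.pow_mem hnN _, ?_⟩
      have h0 : orderOf (n : G) ≠ 0 := (hord _ hnN).ne'
      have hppos : p ^ (orderOf (n : G)).factorization p ≠ 0 := pow_ne_zero _ hp.pos.ne'
      have hsub : N.subtype n = (n : G) := rfl
      rw [map_pow, orderOf_pow' _ hppos, hsub,
        Nat.gcd_eq_right (Nat.ordProj_dvd _ _)]
      exact Nat.not_dvd_ordCompl hp h0
    haveI : Finite (N ⧸ H.subgroupOf N) := Quotient.finite _
    obtain ⟨k, hk⟩ := IsPGroup.iff_card.mp hpg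
    exact ⟨k, by rwa [Subgroup.index_eq_card]⟩
  · -- H is Dedekind
    intro K
    have hKle : K.map H.subtype ≤ H := Subgroup.map_subtype_le K
    have hKfin : ((K.map H.subtype : Subgroup G) : Set G).Finite := hHfin.subset hKle
    have hKnd : ¬ p ∣ Nat.card (K.map H.subtype) := fun hd =>
      hHnotdvd (hd.trans (Subgroup.card_dvd_of_le hKle))
    have hKnorm : (K.map H.subtype).Normal := key _ hKfin hKnd
    have heq : (K.map H.subtype).subgroupOf H = K := by
      rw [Subgroup.subgroupOf, Subgroup.comap_map_eq_self_of_injective H.subtype_injective]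
    exact heq ▸ hKnorm.subgroupOf H
end

section
/- Let Q be a finite abelian group of odd order on which a cyclic group ⟨x⟩ acts by automorphisms such that every cyclic subgroup of Q is invariant under the action. Then x acts on Q by raising every element to a fixed power: there exists an integer k with q^x = q^k for all q ∈ Q. -/
private lemma pow_of_mem_zpowers' {G : Type*} [Group G] [Finite G] {w z : G}
    (h : z ∈ Subgroup.zpowers w) : ∃ t : ℕ, w ^ t = z := by
  obtain ⟨i, hi⟩ := Subgroup.mem_zpowers_iff.mp h
  have hw : (orderOf w : ℤ) ≠ 0 := by
    exact_mod_cast (orderOf_pos w).ne'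
  refine ⟨(i % (orderOf w : ℤ)).toNat, ?_⟩
  rw [← zpow_natCast, Int.toNat_of_nonneg (Int.emod_nonneg i hw), zpow_mod_orderOf, hi]

/-- If a cyclic group `⟨x⟩` acts on a finite abelian group `Q` of odd order
leaving every cyclic subgroup invariant, then `x` acts as a universal power
map: there is an integer `k` with `x • q = q ^ k` for all `q`. -/
theorem stmt_16 (Q : Type*) [CommGroup Q] [Finite Q]
    (hodd : Odd (Nat.card Q)) (x : MulAut Q)
    (hinv : ∀ q : Q, x q ∈ Subgroup.zpowers q) :
    ∃ k : ℤ, ∀ q : Q, x q = q ^ k := by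
  classical
  obtain ⟨a, ha⟩ :=
    Monoid.exists_orderOf_eq_exponent (Monoid.ExponentExists.of_finite (G := Q))
  obtain ⟨k, hk⟩ := Subgroup.mem_zpowers_iff.mp (hinv a)
  set e := Monoid.exponent Q with he
  have epos : 0 < e := Nat.pos_of_ne_zero Monoid.exponent_ne_zero_of_finite
  refine ⟨k, ?_⟩
  suffices H : ∀ n : ℕ, ∀ b : Q, orderOf b = n → x b = b ^ k by
    intro q; exact H _ q rfl
  intro n
  induction n using Nat.strong_induction_on with
  | _ n ih =>
  intro b hb
  obtain ⟨m, hm⟩ := Subgroup.mem_zpowers_iff.mp (hinv b)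
  have hbe : orderOf b ∣ e := Monoid.order_dvd_exponent b
  by_cases htriv : ∀ z : Q, z ∈ Subgroup.zpowers a → z ∈ Subgroup.zpowers b → z = 1
  · -- trivial intersection case
    obtain ⟨s, hs⟩ := Subgroup.mem_zpowers_iff.mp (hinv (a * b))
    have hx : a ^ s * b ^ s = a ^ k * b ^ m := by
      rw [← mul_zpow, hs, map_mul, ← hk, ← hm]
    have hz : a ^ (s - k) = b ^ (m - s) := by
      apply mul_right_cancel (b := a ^ k * b ^ s)
      calc a ^ (s - k) * (a ^ k * b ^ s) = a ^ (s - k + k) * b ^ s := by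
              rw [zpow_add]; simp [mul_assoc]
        _ = a ^ k * b ^ m := by rw [sub_add_cancel, hx]
        _ = b ^ (m - s + s) * a ^ k := by rw [sub_add_cancel]; simp [mul_comm]
        _ = b ^ (m - s) * (a ^ k * b ^ s) := by
              rw [zpow_add]; simp [mul_comm, mul_left_comm, mul_assoc]
    have h1 : a ^ (s - k) = 1 := by
      refine htriv _ (Subgroup.mem_zpowers_iff.mpr ⟨s - k, rfl⟩)
        (Subgroup.mem_zpowers_iff.mpr ⟨m - s, hz.symm⟩)
    have h2 : b ^ (m - s) = 1 := by rw [← hz, h1]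
    have h3 : b ^ (s - k) = 1 := by
      rw [← orderOf_dvd_iff_zpow_eq_one]
      have hdvd : (orderOf b : ℤ) ∣ (orderOf a : ℤ) := by
        exact_mod_cast (ha ▸ hbe : orderOf b ∣ orderOf a)
      exact hdvd.trans (orderOf_dvd_iff_zpow_eq_one.mpr h1)
    have : b ^ m = b ^ k := by
      have hmk : (m : ℤ) = (m - s) + ((s - k) + k) := by ring
      rw [hmk, zpow_add, zpow_add, h2, h3, one_mul, one_mul]
    rw [← hm, this]
  · -- nontrivial intersection case
    push_neg at htriv
    obtain ⟨g, hga, hgb, hg1⟩ := htriv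
    have npos : 0 < n := hb ▸ orderOf_pos b
    obtain ⟨t, ht⟩ := pow_of_mem_zpowers' hgb
    have hnt : ¬ (n ∣ t) := by
      intro hd
      apply hg1
      rw [← ht]
      exact orderOf_dvd_iff_pow_eq_one.mp (hb ▸ hd)
    set γ := Nat.gcd n t with hγdef
    have hγn : γ ∣ n := Nat.gcd_dvd_left n t
    have hγpos : 0 < γ := Nat.gcd_pos_of_pos_left _ npos
    have hγlt : γ < n :=
      lt_of_le_of_ne (Nat.le_of_dvd npos hγn)
        (fun h => hnt (h ▸ Nat.gcd_dvd_right n t))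
    have hbn : b ^ n = 1 := by rw [← hb]; exact pow_orderOf_eq_one b
    have hbγ : b ^ γ ∈ Subgroup.zpowers a := by
      have bez : (γ : ℤ) = n * Int.gcdA n t + t * Int.gcdB n t := by
        have h := Int.gcd_eq_gcd_ab (n : ℤ) (t : ℤ)
        simpa using h
      have key : b ^ (γ : ℤ) = g ^ Int.gcdB (n : ℤ) (t : ℤ) := by
        rw [bez, zpow_add, zpow_mul, zpow_mul, zpow_natCast, zpow_natCast, ht,
          hbn, one_zpow, one_mul]
      rw [← zpow_natCast, key]
      exact Subgroup.zpow_mem _ hga _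
    obtain ⟨j, hj⟩ := pow_of_mem_zpowers' hbγ
    set d := n / γ with hddef
    have hγd : γ * d = n := Nat.mul_div_cancel' hγn
    have hdn : d ∣ n := Nat.div_dvd_of_dvd hγn
    have hdpos : 0 < d := Nat.div_pos (Nat.le_of_dvd npos hγn) hγpos
    have hd1 : 1 < d := by
      by_contra hle
      push_neg at hle
      have hd1' : d = 1 := le_antisymm hle hdpos
      rw [hd1', mul_one] at hγd
      omega
    have hord : orderOf (b ^ γ) = d := by
      rw [orderOf_pow, hb, Nat.gcd_eq_right hγn]
    have hne : n ∣ e := hb ▸ hbe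
    have hgcd : Nat.gcd e j = e / d := by
      have h1 : e / Nat.gcd e j = d := by
        rw [← ha, ← orderOf_pow, hj, hord]
      have hg : Nat.gcd e j ∣ e := Nat.gcd_dvd_left _ _
      have h2 : Nat.gcd e j * d = e := by
        rw [← h1, Nat.mul_div_cancel' hg]
      have hdE : d ∣ e := hord ▸ Monoid.order_dvd_exponent (b ^ γ)
      have h3 : (e / d) * d = e := Nat.div_mul_cancel hdE
      exact Nat.eq_of_mul_eq_mul_right hdpos (h2.trans h3.symm)
    have hdj : (e / d) ∣ j := hgcd ▸ Nat.gcd_dvd_right e j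
    set u := j / (e / d) with hudef
    have hju : (e / d) * u = j := Nat.mul_div_cancel' hdj
    set P := (e / n) * u with hPdef
    have hγeq : γ = n / d := by
      rw [← hγd, Nat.mul_div_cancel _ hdpos]
    have hcomp : (e / n) * (n / d) = e / d := by
      rw [Nat.div_mul_div_comm hne hdn, mul_comm e n, Nat.mul_div_mul_left _ _ npos]
    have hPγ : P * γ = j := by
      calc P * γ = (e / n) * (n / d) * u := by rw [hPdef, hγeq]; ring
        _ = (e / d) * u := by rw [hcomp]
        _ = j := hju
    set c := b * (a ^ P)⁻¹ with hc
    have hcγ : c ^ γ = 1 := by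
      rw [hc, mul_pow, inv_pow, ← pow_mul, hPγ, hj, mul_inv_cancel]
    have hclt : orderOf c < n :=
      lt_of_le_of_lt (Nat.le_of_dvd hγpos (orderOf_dvd_of_pow_eq_one hcγ)) hγlt
    have hxc : x c = c ^ k := ih (orderOf c) hclt c rfl
    have hbdecomp : b = c * a ^ P := by rw [hc]; group
    have hxaP : x (a ^ P) = (a ^ P) ^ (k : ℤ) := by
      rw [map_pow, ← hk, ← zpow_natCast (a ^ k) P, ← zpow_natCast a P,
        ← zpow_mul, ← zpow_mul, mul_comm]
    calc x b = x c * x (a ^ P) := by rw [hbdecomp, map_mul]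
      _ = c ^ k * (a ^ P) ^ (k : ℤ) := by rw [hxc, hxaP]
      _ = (c * a ^ P) ^ (k : ℤ) := (mul_zpow _ _ _).symm
      _ = b ^ k := by rw [← hbdecomp]
end

section
/- Let p be an odd prime and let κ be the (p−1)×(p−1) matrix over ℤ/p²ℤ with 1's on the diagonal, entry p in position (1,2), 1's in positions (i, i+1) for 2 ≤ i ≤ p−2, entry −1 in position (p−1, 1), and 0's elsewhere. Then a·(1 + κ + κ² + ... + κ^{p−1}) = 0 for every a in A = ℤ/p²ℤ ⊕ (pℤ/p²ℤ)^{p−2}, and κ acts on A as an automorphism of order p. -/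
/-!
Write `κ = 1 + N`. The matrix `N` is a weighted cyclic shift of the basis,
`e₀ ↦ p e₁ ↦ p e₂ ↦ ⋯ ↦ p e_{p-2} ↦ -p e₀`, so `N ^ (p - 1) = -p`. On `A` the first step of the
cycle already lands in `p (ℤ/p²ℤ)^{p-1}`, which `p` kills. Expanding
`∑_{k<p} (1 + N)^k = ∑_{m<p} C(p, m+1) N^m`, the term `m = 0` contributes `p a`, the terms with
`0 < m < p - 1` vanish because `p ∣ C(p, m+1)`, and the last term is `a N^{p-1} = -p a`.
Finally `κ^p - 1 = (∑_{k<p} κ^k)(κ - 1)`.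
-/

open Matrix Finset

theorem sum_range_add_one_pow {S : Type*} [Semiring S] (x : S) (n : ℕ) :
    ∑ i ∈ range n, (x + 1) ^ i = ∑ m ∈ range n, n.choose (m + 1) • x ^ m := by
  induction n with
  | zero => simp
  | succ n ih =>
    rw [sum_range_succ, ih, (Commute.one_right x).add_pow]
    simp only [one_pow, mul_one, Nat.choose_succ_succ', add_smul, sum_add_distrib,
      sum_range_succ _ n, Nat.choose_succ_self, zero_smul, add_zero, ← nsmul_eq_mul']
    abel

section vecMul

variable {R ι : Type*} [Ring R] [Fintype ι] [DecidableEq ι]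

theorem vecMul_pow_eq_self_of_vecMul_geom_sum_eq_zero {κ : Matrix ι ι R} {v : ι → R} {n : ℕ}
    (h : v ᵥ* ∑ k ∈ range n, κ ^ k = 0) : v ᵥ* κ ^ n = v := by
  rw [← sub_add_cancel (κ ^ n) 1, ← geom_sum_mul, vecMul_add, vecMul_one, ← vecMul_vecMul, h,
    zero_vecMul, zero_add]

theorem vecMul_geom_sum_add_one_eq_zero {p : ℕ} (hp : p.Prime) {N : Matrix ι ι R}
    {v : ι → R} (hN : p • (v ᵥ* N) = 0) (hNp : v ᵥ* N ^ (p - 1) = -(p • v)) :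
    v ᵥ* ∑ k ∈ range p, (N + 1) ^ k = 0 := by
  obtain ⟨q, rfl⟩ : ∃ q, p = q + 2 := ⟨p - 2, by have := hp.two_le; omega⟩
  have hmid : ∀ m < q, (q + 2).choose (m + 2) • (v ᵥ* N ^ (m + 1)) = 0 := by
    intro m hm
    obtain ⟨t, ht⟩ := hp.dvd_choose_self (by omega : m + 2 ≠ 0) (by omega)
    rw [ht, mul_comm, mul_smul, pow_succ', ← vecMul_vecMul, ← smul_vecMul, hN, zero_vecMul,
      smul_zero]
  rw [sum_range_add_one_pow, vecMul_sum, sum_range_succ, sum_range_succ',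
    sum_eq_zero fun m hm => by rw [vecMul_smul]; exact hmid m (mem_range.mp hm)]
  rw [show q + 2 - 1 = q + 1 by omega] at hNp
  simp only [vecMul_smul, zero_add, pow_zero, vecMul_one, Nat.choose_one_right, Nat.choose_self,
    one_smul, hNp, add_neg_cancel]

end vecMul

/-- The matrix of `e₀ ↦ a e₁`, `eᵢ ↦ eᵢ₊₁` for `0 < i < n - 1`, `e_{n-1} ↦ -e₀` acting on row
vectors; the paper's `κ` is `weightedCycle (p - 1) p + 1`. -/
def weightedCycle {R : Type*} [Ring R] (n : ℕ) (a : R) : Matrix (Fin n) (Fin n) R :=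
  Matrix.of fun i j =>
    if (j : ℕ) = i + 1 then (if (i : ℕ) = 0 then a else 1)
    else if (i : ℕ) = n - 1 ∧ (j : ℕ) = 0 then -1
    else 0

section weightedCycle

variable {R : Type*} [CommRing R] {n : ℕ} (a : R)

theorem single_vecMul_weightedCycle_zero (hn : 2 ≤ n) :
    Pi.single ⟨0, by omega⟩ 1 ᵥ* weightedCycle n a = a • Pi.single ⟨1, by omega⟩ 1 := by
  ext j
  simp only [single_one_vecMul, row, weightedCycle, of_apply, Pi.smul_apply, Pi.single_apply,
    Fin.ext_iff]
  split_ifs <;> first | omega | simp_all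

theorem single_vecMul_weightedCycle_of_lt {i : ℕ} (hi : 1 ≤ i) (hin : i + 1 < n) :
    Pi.single ⟨i, by omega⟩ 1 ᵥ* weightedCycle n a = Pi.single ⟨i + 1, hin⟩ 1 := by
  ext j
  simp only [single_one_vecMul, row, weightedCycle, of_apply, Pi.single_apply, Fin.ext_iff]
  split_ifs <;> first | omega | simp_all

theorem single_vecMul_weightedCycle_last (hn : 2 ≤ n) :
    Pi.single ⟨n - 1, by omega⟩ 1 ᵥ* weightedCycle n a = -Pi.single ⟨0, by omega⟩ 1 := by
  ext j
  simp only [single_one_vecMul, row, weightedCycle, of_apply, Pi.neg_apply, Pi.single_apply,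
    Fin.ext_iff]
  split_ifs <;> first | omega | simp_all

theorem single_vecMul_weightedCycle_pow {i j : ℕ} (hi : 1 ≤ i) (hij : i ≤ j) (hj : j < n) :
    Pi.single ⟨i, by omega⟩ 1 ᵥ* weightedCycle n a ^ (j - i) = Pi.single ⟨j, hj⟩ 1 := by
  induction j, hij using Nat.le_induction with
  | base => rw [Nat.sub_self, pow_zero, vecMul_one]
  | succ j hij ih =>
    rw [Nat.sub_add_comm hij, pow_succ, ← vecMul_vecMul, ih (by omega),
      single_vecMul_weightedCycle_of_lt a (by omega) hj]

theorem weightedCycle_pow_self (hn : 2 ≤ n) : weightedCycle n a ^ n = -(a • 1) := by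
  refine ext_of_single_vecMul fun ⟨i, hi⟩ => ?_
  rw [vecMul_neg, vecMul_smul, vecMul_one]
  rcases Nat.eq_zero_or_pos i with rfl | hi0
  · have hsplit : weightedCycle n a ^ n =
        weightedCycle n a * weightedCycle n a ^ (n - 1 - 1) * weightedCycle n a := by
      rw [← pow_succ', ← pow_succ]; congr 1; omega
    rw [hsplit, ← vecMul_vecMul, ← vecMul_vecMul, single_vecMul_weightedCycle_zero a hn,
      smul_vecMul, single_vecMul_weightedCycle_pow a le_rfl (by omega) (by omega), smul_vecMul,
      single_vecMul_weightedCycle_last a hn, smul_neg]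
  · have hsplit : weightedCycle n a ^ n = weightedCycle n a ^ (n - 1 - i) * weightedCycle n a *
        weightedCycle n a * weightedCycle n a ^ (i - 1) := by
      rw [← pow_succ, ← pow_succ, ← pow_add]; congr 1; omega
    rw [hsplit, ← vecMul_vecMul, ← vecMul_vecMul, ← vecMul_vecMul,
      single_vecMul_weightedCycle_pow a hi0 (by omega) (by omega),
      single_vecMul_weightedCycle_last a hn, neg_vecMul, single_vecMul_weightedCycle_zero a hn,
      neg_vecMul, smul_vecMul, single_vecMul_weightedCycle_pow a le_rfl hi0 hi]

variable {a}

-- Row `0` of `weightedCycle n a` is `a e₁`; every other row only reads a coordinate `v i`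
-- with `i ≠ 0`.
theorem dvd_vecMul_weightedCycle (hn : 2 ≤ n) {v : Fin n → R}
    (hv : ∀ i : Fin n, (i : ℕ) ≠ 0 → a ∣ v i) (j : Fin n) :
    a ∣ (v ᵥ* weightedCycle n a) j := by
  rw [vecMul, dotProduct]
  refine Finset.dvd_sum fun i _ => ?_
  by_cases hi : (i : ℕ) = 0
  · refine Dvd.dvd.mul_left ?_ _
    simp only [weightedCycle, of_apply, hi]
    split_ifs <;> first | omega | simp_all
  · exact (hv i hi).mul_right _

theorem dvd_vecMul_weightedCycle_add_one (hn : 2 ≤ n) {v : Fin n → R}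
    (hv : ∀ i : Fin n, (i : ℕ) ≠ 0 → a ∣ v i) {i : Fin n} (hi : (i : ℕ) ≠ 0) :
    a ∣ (v ᵥ* (weightedCycle n a + 1)) i := by
  rw [vecMul_add, vecMul_one, Pi.add_apply]
  exact dvd_add (dvd_vecMul_weightedCycle hn hv i) (hv i hi)

theorem smul_vecMul_weightedCycle_eq_zero (hn : 2 ≤ n) (ha : a * a = 0) {v : Fin n → R}
    (hv : ∀ i : Fin n, (i : ℕ) ≠ 0 → a ∣ v i) : a • (v ᵥ* weightedCycle n a) = 0 := by
  ext j
  obtain ⟨c, hc⟩ := dvd_vecMul_weightedCycle hn hv j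
  rw [Pi.smul_apply, hc, smul_eq_mul, ← mul_assoc, ha, zero_mul, Pi.zero_apply]

theorem single_vecMul_weightedCycle_add_one_ne (hn : 2 ≤ n) (ha : a ≠ 0) :
    Pi.single ⟨0, by omega⟩ 1 ᵥ* (weightedCycle n a + 1) ≠ Pi.single ⟨0, by omega⟩ 1 := by
  rw [vecMul_add, vecMul_one, single_vecMul_weightedCycle_zero a hn, add_ne_right]
  intro h
  exact ha (by simpa using congrFun h ⟨1, by omega⟩)

theorem vecMul_geom_sum_weightedCycle_add_one_eq_zero {p : ℕ} (hp : p.Prime) (hn : 2 ≤ p - 1)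
    (hpp : (p : R) * p = 0) {v : Fin (p - 1) → R}
    (hv : ∀ i : Fin (p - 1), (i : ℕ) ≠ 0 → (p : R) ∣ v i) :
    v ᵥ* ∑ k ∈ range p, (weightedCycle (p - 1) (p : R) + 1) ^ k = 0 := by
  refine vecMul_geom_sum_add_one_eq_zero hp ?_ ?_
  · rw [← Nat.cast_smul_eq_nsmul R]
    exact smul_vecMul_weightedCycle_eq_zero hn hpp hv
  · rw [weightedCycle_pow_self _ hn, vecMul_neg, vecMul_smul, vecMul_one, Nat.cast_smul_eq_nsmul]

end weightedCycle

/-- For an odd prime `p`, the matrix `κ` over `ℤ/p²ℤ` described in the paper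
annihilates `A = ℤ/p²ℤ ⊕ (pℤ/p²ℤ)^{p-2}` under `1 + κ + … + κ^{p-1}`, and
`κ` acts on `A` as an automorphism of order `p`. -/
theorem stmt_18 {p : ℕ} (hp : p.Prime) (hodd : Odd p)
    (κ : Matrix (Fin (p - 1)) (Fin (p - 1)) (ZMod (p ^ 2)))
    (hκ : κ = fun i j : Fin (p - 1) =>
      if i = j then 1
      else if (j : ℕ) = (i : ℕ) + 1 then (if (i : ℕ) = 0 then (p : ZMod (p ^ 2)) else 1)
      else if (i : ℕ) = p - 2 ∧ (j : ℕ) = 0 then -1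
      else 0)
    (inA : (Fin (p - 1) → ZMod (p ^ 2)) → Prop)
    (hinA : inA = fun v => ∀ i : Fin (p - 1), (i : ℕ) ≠ 0 →
      ∃ c : ZMod (p ^ 2), v i = (p : ZMod (p ^ 2)) * c) :
    (∀ v, inA v → Matrix.vecMul v (∑ k ∈ Finset.range p, κ ^ k) = 0) ∧
    (∀ v, inA v → inA (Matrix.vecMul v κ)) ∧
    (∀ v, inA v → Matrix.vecMul v (κ ^ p) = v) ∧
    (∃ v, inA v ∧ Matrix.vecMul v κ ≠ v) := by
  have hn : 2 ≤ p - 1 := by obtain ⟨k, rfl⟩ := hodd; have := hp.two_le; omega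
  have hκW : κ = weightedCycle (p - 1) (p : ZMod (p ^ 2)) + 1 := by
    subst hκ
    ext i j
    simp only [weightedCycle, Matrix.add_apply, of_apply, one_apply, Fin.ext_iff]
    split_ifs <;> first | omega | simp_all
  have hpp : (p : ZMod (p ^ 2)) * p = 0 := by rw [← Nat.cast_mul, ← sq, ZMod.natCast_self]
  have hp0 : (p : ZMod (p ^ 2)) ≠ 0 := by
    rw [Ne, ZMod.natCast_eq_zero_iff]
    intro hdvd
    nlinarith [Nat.le_of_dvd hp.pos hdvd, hp.two_le]
  subst hinA hκW
  have hsum := fun v hv => vecMul_geom_sum_weightedCycle_add_one_eq_zero hp hn hpp (v := v) hv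
  refine ⟨hsum, fun v hv i hi => dvd_vecMul_weightedCycle_add_one hn hv hi,
    fun v hv => vecMul_pow_eq_self_of_vecMul_geom_sum_eq_zero (hsum v hv),
    Pi.single ⟨0, by omega⟩ 1, fun i hi => ⟨0, by simp [Fin.ext_iff, hi]⟩,
    single_vecMul_weightedCycle_add_one_ne hn hp0⟩
end

section
/- For every odd prime p there exists a finite p-group of order p^{p+3} admitting a class-preserving automorphism which is not inner. -/
open Polynomial

section Construction

variable (p : ℕ) [hp : Fact p.Prime]

/-- Carrier of the Burnside-type group, padded by `C_p^{p-3}`. -/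
structure BG : Type where
  a : GaloisField p 2
  b : GaloisField p 2
  z : Fin (p - 3) → ZMod p
  w : GaloisField p 2

namespace BG

variable {p}

@[ext] theorem ext' {g h : BG p} (ha : g.a = h.a) (hb : g.b = h.b)
    (hz : g.z = h.z) (hw : g.w = h.w) : g = h := by
  cases g; cases h; simp_all

noncomputable instance : Mul (BG p) :=
  ⟨fun g h => ⟨g.a + h.a, g.b + h.b, g.z + h.z, g.w + h.w + g.a * h.b⟩⟩

noncomputable instance : One (BG p) := ⟨⟨0, 0, 0, 0⟩⟩

noncomputable instance : Inv (BG p) :=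
  ⟨fun g => ⟨-g.a, -g.b, -g.z, -g.w + g.a * g.b⟩⟩

@[simp] theorem mul_a (g h : BG p) : (g * h).a = g.a + h.a := rfl
@[simp] theorem mul_b (g h : BG p) : (g * h).b = g.b + h.b := rfl
@[simp] theorem mul_z (g h : BG p) : (g * h).z = g.z + h.z := rfl
@[simp] theorem mul_w (g h : BG p) : (g * h).w = g.w + h.w + g.a * h.b := rfl
@[simp] theorem one_a : (1 : BG p).a = 0 := rfl
@[simp] theorem one_b : (1 : BG p).b = 0 := rfl
@[simp] theorem one_z : (1 : BG p).z = 0 := rfl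
@[simp] theorem one_w : (1 : BG p).w = 0 := rfl
@[simp] theorem inv_a (g : BG p) : g⁻¹.a = -g.a := rfl
@[simp] theorem inv_b (g : BG p) : g⁻¹.b = -g.b := rfl
@[simp] theorem inv_z (g : BG p) : g⁻¹.z = -g.z := rfl
@[simp] theorem inv_w (g : BG p) : g⁻¹.w = -g.w + g.a * g.b := rfl

noncomputable instance : Group (BG p) where
  mul_assoc g h k := by ext <;> simp [Pi.add_apply] <;> ring
  one_mul g := by ext <;> simp
  mul_one g := by ext <;> simp
  inv_mul_cancel g := by ext <;> simp <;> ring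

theorem conj_def (h g : BG p) :
    h * g * h⁻¹ = ⟨g.a, g.b, g.z, g.w + h.a * g.b - g.a * h.b⟩ := by
  ext <;> simp <;> ring

/-- The equivalence with a product type, for counting. -/
def equivProd :
    BG p ≃ (GaloisField p 2) × (GaloisField p 2) × (Fin (p - 3) → ZMod p) × (GaloisField p 2) where
  toFun g := (g.a, g.b, g.z, g.w)
  invFun x := ⟨x.1, x.2.1, x.2.2.1, x.2.2.2⟩
  left_inv g := rfl
  right_inv x := rfl

theorem card_eq (h3 : 3 ≤ p) : Nat.card (BG p) = p ^ (p + 3) := by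
  rw [Nat.card_congr (equivProd (p := p)), Nat.card_prod, Nat.card_prod, Nat.card_prod,
    GaloisField.card p 2 two_ne_zero, Nat.card_fun, Nat.card_eq_fintype_card (α := ZMod p),
    ZMod.card, Nat.card_eq_fintype_card (α := Fin (p - 3)), Fintype.card_fin,
    ← pow_add, ← pow_add, ← pow_add]
  congr 1
  omega

/-- The Frobenius-twist automorphism. -/
noncomputable def σ : MulAut (BG p) where
  toFun g := ⟨g.a, g.b, g.z, g.w + g.a ^ p⟩
  invFun g := ⟨g.a, g.b, g.z, g.w - g.a ^ p⟩
  left_inv g := by ext <;> simp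
  right_inv g := by ext <;> simp
  map_mul' g h := by
    ext <;> simp
    rw [add_pow_char]
    ring

theorem σ_apply (g : BG p) : σ g = ⟨g.a, g.b, g.z, g.w + g.a ^ p⟩ := rfl

theorem classPreserving (g : BG p) : IsConj g (σ g) := by
  rw [isConj_iff]
  by_cases ha : g.a = 0
  · refine ⟨1, ?_⟩
    rw [conj_def, σ_apply]
    ext <;> simp [ha, zero_pow hp.out.ne_zero]
  · refine ⟨⟨0, -(g.a ^ p * g.a⁻¹), 0, 0⟩, ?_⟩
    rw [conj_def, σ_apply]
    ext <;> simp
    field_simp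

theorem exists_pow_ne : ∃ x : GaloisField p 2, x ^ p ≠ x := by
  classical
  by_contra hall
  push_neg at hall
  have hfin : Fintype (GaloisField p 2) := Fintype.ofFinite _
  have hplt : 1 < p := hp.out.one_lt
  set f : (GaloisField p 2)[X] := X ^ p - X with hf
  have hfne : f ≠ 0 := FiniteField.X_pow_card_sub_X_ne_zero _ hplt
  have hdeg : f.natDegree = p := FiniteField.X_pow_card_sub_X_natDegree_eq _ hplt
  have hsub : (Finset.univ : Finset (GaloisField p 2)) ⊆ f.roots.toFinset := by
    intro x _
    rw [Multiset.mem_toFinset, mem_roots']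
    exact ⟨hfne, by simp [hf, IsRoot, sub_eq_zero, hall x]⟩
  have h1 : Fintype.card (GaloisField p 2) ≤ f.roots.toFinset.card :=
    Finset.card_le_card hsub
  have h2 : f.roots.toFinset.card ≤ p := by
    calc f.roots.toFinset.card ≤ Multiset.card f.roots := f.roots.toFinset_card_le
    _ ≤ f.natDegree := f.card_roots'
    _ = p := hdeg
  have hcard : Fintype.card (GaloisField p 2) = p ^ 2 := by
    rw [← Nat.card_eq_fintype_card, GaloisField.card p 2 two_ne_zero]
  rw [hcard] at h1
  nlinarith

theorem notInner : ¬ ∃ h : BG p, ∀ g : BG p, σ g = h * g * h⁻¹ := by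
  rintro ⟨h, hh⟩
  have key : ∀ x : GaloisField p 2, x ^ p = -x * h.b := by
    intro x
    have h0 := hh ⟨x, 0, 0, 0⟩
    rw [σ_apply, conj_def] at h0
    have h1 := congrArg BG.w h0
    simpa using h1
  have h1 := key 1
  rw [one_pow] at h1
  have hb : h.b = -1 := by linear_combination h1
  obtain ⟨x, hx⟩ := exists_pow_ne (p := p)
  apply hx
  rw [key x, hb]
  ring

end BG

end Construction

/-- For every odd prime `p` there is a finite `p`-group of order `p ^ (p + 3)`
admitting a class-preserving automorphism which is not inner. -/
theorem stmt_19 {p : ℕ} (hp : p.Prime) (hodd : Odd p) :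
    ∃ (G : Type) (_ : Group G), Nat.card G = p ^ (p + 3) ∧
      ∃ σ : MulAut G, (∀ g : G, IsConj g (σ g)) ∧
        ¬ ∃ h : G, ∀ g : G, σ g = h * g * h⁻¹ := by
  haveI : Fact p.Prime := ⟨hp⟩
  have h3 : 3 ≤ p := by
    rcases hodd with ⟨k, rfl⟩
    have := hp.two_le
    omega
  exact ⟨BG p, inferInstance, BG.card_eq h3, BG.σ, BG.classPreserving, BG.notInner⟩
end
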